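/- For each k ≥ 1, the generating function Ψ*_k(x) = Σ_{n≥k} W*_{m,r}[n,k;t]_{p,q} x^{n-k} satisfies the first-order relation (1 - x p^{m(t-k)} [mk+r]_{p,q}) · Ψ*_k(x) = Ψ*_{k-1}(x) as formal power series in x over ℤ[p,q]. -/

import Mathlib

open Finset

/-- `p` as an indeterminate in `ℤ[p,q]`. -/
noncomputable def P : MvPolynomial (Fin 2) ℤ := MvPolynomial.X 0

/-- `q` as an indeterminate in `ℤ[p,q]`. -/
noncomputable def Q : MvPolynomial (Fin 2) ℤ := MvPolynomial.X 1

/-- The (p,q)-number `[s]_{p,q} = Σ_{i=0}^{s-1} p^{s-1-i} q^i`. -/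
noncomputable def pqNum (s : ℕ) : MvPolynomial (Fin 2) ℤ :=
  ∑ i ∈ Finset.range s, P ^ (s - 1 - i) * Q ^ i

/-- Second form of the type 2 (p,q)-analogue of the r-Whitney numbers of the
second kind, `W*_{m,r}[n,k;t]_{p,q}`. -/
noncomputable def Wstar (m r t : ℕ) : ℕ → ℕ → MvPolynomial (Fin 2) ℤ
  | 0, 0 => 1
  | 0, _ + 1 => 0
  | n + 1, 0 => pqNum r * P ^ (m * t) * Wstar m r t n 0
  | n + 1, k + 1 =>
      Wstar m r t n k +
        pqNum (m * (k + 1) + r) * P ^ (m * (t - (k + 1))) * Wstar m r t n (k + 1)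

/-! Comparing coefficients of `x ^ n`, the identity is the defining recurrence of
`W*[n + k + 1, k + 1]`; at `n = 0` it also needs `W*[k, k + 1] = 0`. -/

theorem PowerSeries.one_sub_X_mul_C_mul_mk_eq_mk {R : Type*} [CommRing R] (c : R)
    {a b : ℕ → R} (h_zero : a 0 = b 0) (h_succ : ∀ n, a (n + 1) = b (n + 1) + c * a n) :
    (1 - X * C c) * mk a = mk b := by
  ext n
  rw [sub_mul, one_mul, map_sub, mul_assoc]
  cases n with
  | zero => simp [h_zero]
  | succ n => rw [coeff_succ_X_mul, coeff_C_mul, coeff_mk, coeff_mk, coeff_mk, h_succ]; ring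

namespace Wstar

variable (m r t : ℕ)

theorem eq_zero_of_lt {n k : ℕ} (h : n < k) : Wstar m r t n k = 0 := by
  induction n generalizing k with
  | zero => obtain ⟨k, rfl⟩ := Nat.exists_eq_succ_of_ne_zero h.ne'; rfl
  | succ n ih =>
    obtain ⟨k, rfl⟩ := Nat.exists_eq_succ_of_ne_zero (Nat.zero_lt_of_lt h).ne'
    rw [Wstar, ih (by omega), ih (by omega), mul_zero, add_zero]

theorem succ_succ (n k : ℕ) :
    Wstar m r t (n + 1) (k + 1) =
      Wstar m r t n k +
        P ^ (m * (t - (k + 1))) * pqNum (m * (k + 1) + r) * Wstar m r t n (k + 1) := by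
  rw [Wstar, mul_comm (pqNum _)]

end Wstar

theorem wstar_genfun_step_general (m r t k : ℕ) :
    (1 - PowerSeries.X * PowerSeries.C (R := MvPolynomial (Fin 2) ℤ)
          (P ^ (m * (t - (k + 1))) * pqNum (m * (k + 1) + r))) *
      PowerSeries.mk (fun n => Wstar m r t (n + (k + 1)) (k + 1)) =
    PowerSeries.mk (fun n => Wstar m r t (n + k) k) := by
  apply PowerSeries.one_sub_X_mul_C_mul_mk_eq_mk
  · rw [zero_add, Wstar.succ_succ, Wstar.eq_zero_of_lt m r t (Nat.lt_succ_self k), mul_zero,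
      add_zero, zero_add]
  · intro n
    rw [← add_assoc, Wstar.succ_succ, add_right_comm, add_assoc]

theorem wstar_genfun_step (m r t k : ℕ) (ht : k + 1 ≤ t) :
    (1 - PowerSeries.X * PowerSeries.C (R := MvPolynomial (Fin 2) ℤ)
          (P ^ (m * (t - (k + 1))) * pqNum (m * (k + 1) + r))) *
      PowerSeries.mk (fun n => Wstar m r t (n + (k + 1)) (k + 1)) =
    PowerSeries.mk (fun n => Wstar m r t (n + k) k) :=
  wstar_genfun_step_general m r t k
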